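/- Let T be a triangulated category with thick subcategories X and Y, and set U = X ∩ Y. If both X * Y = T and Y * X = T, then there is a splitting triangle equivalence T/U ≃ X/U × Y/U. -/

import Mathlib

open CategoryTheory Limits Pretriangulated

universe v u

namespace CategoryTheory.Triangulated

/-- The (December 2024) Mathlib notion of a triangulated subcategory, removed since. -/
structure Subcategory (C : Type u) [Category.{v} C] [HasZeroObject C] [HasShift C ℤ]
    [Preadditive C] [∀ n : ℤ, (shiftFunctor C n).Additive] [Pretriangulated C] where
  P : C → Prop
  zero' : ∃ (Z : C) (_ : IsZero Z), P Z
  shift (X : C) (n : ℤ) : P X → P (X⟦n⟧)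
  ext₂' (T : Triangle C) (_ : T ∈ distTriang C) : P T.obj₁ → P T.obj₃ → ObjectProperty.isoClosure P T.obj₂

namespace Subcategory

open ZeroObject

variable {C : Type u} [Category.{v} C] [HasZeroObject C] [HasShift C ℤ]
  [Preadditive C] [∀ n : ℤ, (shiftFunctor C n).Additive] [Pretriangulated C]

lemma zero (S : Subcategory C) [ObjectProperty.IsClosedUnderIsomorphisms S.P] : S.P 0 := by
  obtain ⟨X, hX, mem⟩ := S.zero'
  exact ObjectProperty.prop_of_iso _ hX.isoZero mem

def mk' (P : C → Prop) (zero : P 0)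
    (shift : ∀ (X : C) (n : ℤ), P X → P (X⟦n⟧))
    (ext₂ : ∀ (T : Triangle C) (_ : T ∈ distTriang C), P T.obj₁ → P T.obj₃ → P T.obj₂) :
    Subcategory C where
  P := P
  zero' := ⟨0, isZero_zero _, zero⟩
  shift := shift
  ext₂' T hT h₁ h₃ := ⟨_, ext₂ T hT h₁ h₃, ⟨Iso.refl _⟩⟩

lemma ext₂ (S : Subcategory C) [ObjectProperty.IsClosedUnderIsomorphisms S.P]
    (T : Triangle C) (hT : T ∈ distTriang C) (h₁ : S.P T.obj₁) (h₃ : S.P T.obj₃) :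
    S.P T.obj₂ := by
  obtain ⟨Y, hY, ⟨e⟩⟩ := S.ext₂' T hT h₁ h₃
  exact ObjectProperty.prop_of_iso _ e.symm hY

def W (S : Subcategory C) : MorphismProperty C := fun X Y f =>
  ∃ (Z : C) (g : Y ⟶ Z) (h : Z ⟶ X⟦(1 : ℤ)⟧) (_ : Triangle.mk f g h ∈ distTriang C), S.P Z

end Subcategory

end CategoryTheory.Triangulated

variable {C : Type u} [Category.{v} C] [HasZeroObject C] [HasShift C ℤ]
  [Preadditive C] [∀ n : ℤ, (shiftFunctor C n).Additive] [Pretriangulated C]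

/-- `S * T` for classes of objects of a pretriangulated category. -/
def star (S T : Set C) : Set C :=
  {E | ∃ (X Y : C) (f : X ⟶ E) (g : E ⟶ Y) (h : Y ⟶ X⟦(1 : ℤ)⟧),
    X ∈ S ∧ Y ∈ T ∧ Triangle.mk f g h ∈ distTriang C}

/-- The intersection of two (strictly full) triangulated subcategories. -/
def interSub (X Y : Triangulated.Subcategory C) [ObjectProperty.IsClosedUnderIsomorphisms X.P]
    [ObjectProperty.IsClosedUnderIsomorphisms Y.P] : Triangulated.Subcategory C :=
  Triangulated.Subcategory.mk' (fun t => X.P t ∧ Y.P t)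
    ⟨X.zero, Y.zero⟩
    (fun t n h => ⟨X.shift t n h.1, Y.shift t n h.2⟩)
    (fun T hT h₁ h₃ => ⟨X.ext₂ T hT h₁.1 h₃.1, Y.ext₂ T hT h₁.2 h₃.2⟩)

/-!
In the Verdier quotient `C/U` there are no nonzero morphisms from an object of `X` to one of
`Y`: such a morphism is a left fraction `x ⟶ y' ⟵ y` with `y' ∈ Y`, and splitting the cone of
`x ⟶ y'` along `X * Y = C` and applying the octahedral axiom produces `y' ⟶ y''` with cone in
`X ∩ Y` that kills `x ⟶ y'`. Symmetrically, `Y * X = C` kills all morphisms from `Y` to `X`.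
Hence the triangle `x ⟶ E ⟶ y ⟶ x⟦1⟧` given by `X * Y = C` splits in `C/U`, and
`(x, y) ↦ x ⊞ y` is fully faithful and essentially surjective.
-/

namespace CategoryTheory

instance {A B A' B' : Type*} [Category A] [Category B] [Category A'] [Category B']
    (F : A ⥤ A') (G : B ⥤ B') [F.Faithful] [G.Faithful] : (F.prod G).Faithful where
  map_injective h :=
    Prod.ext (F.map_injective (Prod.ext_iff.1 h).1) (G.map_injective (Prod.ext_iff.1 h).2)

noncomputable def biprodFunctor (D : Type*) [Category D] [Preadditive D] [HasBinaryBiproducts D] :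
    D × D ⥤ D where
  obj p := p.1 ⊞ p.2
  map f := biprod.map f.1 f.2

section BiprodDecomposition

variable {D : Type*} [Category D] [Preadditive D] [HasBinaryBiproducts D] {P Q : ObjectProperty D}

instance : (biprodFunctor D).Faithful where
  map_injective {_ _} f g h := by
    change biprod.map f.1 f.2 = biprod.map g.1 g.2 at h
    exact Prod.ext (by simpa using biprod.inl ≫= h =≫ biprod.fst)
      (by simpa using biprod.inr ≫= h =≫ biprod.snd)

lemma full_prod_ι_comp_biprodFunctor (hPQ : ∀ ⦃p q⦄, P p → Q q → ∀ f : p ⟶ q, f = 0)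
    (hQP : ∀ ⦃q p⦄, Q q → P p → ∀ f : q ⟶ p, f = 0) :
    (P.ι.prod Q.ι ⋙ biprodFunctor D).Full where
  map_surjective {p q} f := by
    change p.1.obj ⊞ p.2.obj ⟶ q.1.obj ⊞ q.2.obj at f
    refine ⟨(ObjectProperty.homMk (biprod.inl ≫ f ≫ biprod.fst),
      ObjectProperty.homMk (biprod.inr ≫ f ≫ biprod.snd)), ?_⟩
    change biprod.map (biprod.inl ≫ f ≫ biprod.fst) (biprod.inr ≫ f ≫ biprod.snd) = f
    conv_rhs => rw [← Biprod.ofComponents_eq f,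
      hPQ p.1.property q.2.property (biprod.inl ≫ f ≫ biprod.snd),
      hQP p.2.property q.1.property (biprod.inr ≫ f ≫ biprod.fst)]
    simp [Biprod.ofComponents, biprod.map_eq]

lemma essSurj_prod_ι_comp_biprodFunctor
    (h : ∀ d, ∃ p q, P p ∧ Q q ∧ Nonempty (d ≅ p ⊞ q)) :
    (P.ι.prod Q.ι ⋙ biprodFunctor D).EssSurj where
  mem_essImage d := by
    obtain ⟨p, q, hp, hq, ⟨e⟩⟩ := h d
    exact ⟨(⟨p, hp⟩, ⟨q, hq⟩), ⟨e.symm⟩⟩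

lemma nonempty_equivalence_prod_of_forall_iso_biprod
    (hPQ : ∀ ⦃p q⦄, P p → Q q → ∀ f : p ⟶ q, f = 0)
    (hQP : ∀ ⦃q p⦄, Q q → P p → ∀ f : q ⟶ p, f = 0)
    (h : ∀ d, ∃ p q, P p ∧ Q q ∧ Nonempty (d ≅ p ⊞ q)) :
    Nonempty (D ≌ P.FullSubcategory × Q.FullSubcategory) := by
  have := full_prod_ι_comp_biprodFunctor hPQ hQP
  have := essSurj_prod_ι_comp_biprodFunctor h
  have : (P.ι.prod Q.ι ⋙ biprodFunctor D).IsEquivalence := { }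
  exact ⟨(P.ι.prod Q.ι ⋙ biprodFunctor D).asEquivalence.symm⟩

end BiprodDecomposition

namespace Triangulated.Subcategory

instance (S : Subcategory C) : ObjectProperty.IsTriangulated S.P where
  exists_zero := let ⟨Z, hZ, h⟩ := S.zero'; ⟨Z, hZ, h⟩
  isStableUnderShiftBy n := ⟨fun X => S.shift X n⟩
  ext₂' := S.ext₂'

section Localization

variable [IsTriangulated C] (S : Subcategory C)

instance : S.W.HasLeftCalculusOfFractions :=
  inferInstanceAs (ObjectProperty.trW S.P).HasLeftCalculusOfFractions

instance : S.W.IsCompatibleWithTriangulation :=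
  inferInstanceAs (ObjectProperty.trW S.P).IsCompatibleWithTriangulation

end Localization

end Triangulated.Subcategory

end CategoryTheory

section StarDecomposition

variable [IsTriangulated C] {S A B : Triangulated.Subcategory C}
  [ObjectProperty.IsClosedUnderIsomorphisms A.P] [ObjectProperty.IsClosedUnderIsomorphisms B.P]

lemma exists_W_comp_eq_zero_of_star (hS : ∀ u, S.P u ↔ A.P u ∧ B.P u)
    (hAB : ∀ E : C, E ∈ star {a | A.P a} {b | B.P b})
    {x y : C} (hx : A.P x) (hy : B.P y) (f : x ⟶ y) :
    ∃ (y' : C) (s : y ⟶ y'), S.W s ∧ f ≫ s = 0 := by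
  obtain ⟨c, g, h, hc⟩ := distinguished_cocone_triangle f
  obtain ⟨a, b, i, p, k, ha, hb, hab⟩ := hAB c
  obtain ⟨u, v, w, hu⟩ := distinguished_cocone_triangle (g ≫ p)
  -- the octahedron on `y ⟶ c ⟶ b` puts `u` in an extension of `a⟦1⟧` by `x⟦1⟧`
  have oct := Triangulated.someOctahedron rfl (rot_of_distTriang _ hc)
    (rot_of_distTriang _ hab) hu
  have hfg : f ≫ g = 0 := comp_distTriang_mor_zero₁₂ _ hc
  refine ⟨b, g ≫ p, ⟨u, v, w, hu, (hS u).2 ⟨?_, ?_⟩⟩, by simp [reassoc_of% hfg]⟩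
  · exact A.ext₂ _ oct.mem (A.shift _ 1 hx) (A.shift _ 1 ha)
  · exact B.ext₂ _ (rot_of_distTriang _ hu) hb (B.shift _ 1 hy)

lemma hom_eq_zero_of_star (hS : ∀ u, S.P u ↔ A.P u ∧ B.P u)
    (hAB : ∀ E : C, E ∈ star {a | A.P a} {b | B.P b})
    {x y : C} (hx : A.P x) (hy : B.P y) {d e : S.W.Localization}
    (i : d ≅ S.W.Q.obj x) (j : e ≅ S.W.Q.obj y) (f : d ⟶ e) : f = 0 := by
  suffices ∀ φ : S.W.Q.obj x ⟶ S.W.Q.obj y, φ = 0 by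
    simpa using i.hom ≫= this (i.inv ≫ f ≫ j.hom) =≫ j.inv
  intro φ
  obtain ⟨α, rfl⟩ := Localization.exists_leftFraction S.W.Q S.W φ
  have hY' : B.P α.Y' := by
    obtain ⟨Z, g, h, hT, hZ⟩ := α.hs
    exact B.ext₂ _ hT hy ((hS Z).1 hZ).2
  obtain ⟨y', s, hs, hfs⟩ := exists_W_comp_eq_zero_of_star hS hAB hx hY' α.f
  have := Localization.inverts S.W.Q S.W s hs
  have := Localization.inverts S.W.Q S.W α.s α.hs
  have hf : S.W.Q.map α.f = 0 := by
    rw [← cancel_mono (S.W.Q.map s), ← S.W.Q.map_comp, hfs, S.W.Q.map_zero, zero_comp]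
  rw [← cancel_mono (S.W.Q.map α.s), MorphismProperty.LeftFraction.map_comp_map_s, hf, zero_comp]

lemma exists_iso_biprod_of_star (hS : ∀ u, S.P u ↔ A.P u ∧ B.P u)
    (hAB : ∀ E : C, E ∈ star {a | A.P a} {b | B.P b})
    (hBA : ∀ E : C, E ∈ star {b | B.P b} {a | A.P a}) (d : S.W.Localization) :
    ∃ x y, A.P x ∧ B.P y ∧ Nonempty (d ≅ S.W.Q.obj x ⊞ S.W.Q.obj y) := by
  have := Localization.essSurj S.W.Q S.W
  obtain ⟨x, y, f, g, h, hx, hy, hT⟩ := hAB (S.W.Q.objPreimage d)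
  have hh : S.W.Q.map h = 0 := hom_eq_zero_of_star (fun u => (hS u).trans and_comm) hBA hy
    (A.shift x 1 hx) (Iso.refl _) (Iso.refl _) _
  obtain ⟨e, -, -⟩ := exists_iso_binaryBiproduct_of_distTriang _
    (S.W.Q.map_distinguished _ hT) (by change S.W.Q.map h ≫ _ = 0; rw [hh]; exact zero_comp)
  exact ⟨x, y, hx, hy, ⟨(S.W.Q.objObjPreimageIso d).symm ≪≫ e⟩⟩

end StarDecomposition

theorem splitting_equivalence_of_star_eq_top_general [IsTriangulated C]
    (X Y : Triangulated.Subcategory C)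
    [ObjectProperty.IsClosedUnderIsomorphisms X.P] [ObjectProperty.IsClosedUnderIsomorphisms Y.P]
    (hstarXY : ∀ E : C, E ∈ star {x | X.P x} {y | Y.P y})
    (hstarYX : ∀ E : C, E ∈ star {y | Y.P y} {x | X.P x}) :
    Nonempty ((interSub X Y).W.Localization ≌
      (ObjectProperty.FullSubcategory fun d : (interSub X Y).W.Localization =>
        ∃ x : C, X.P x ∧ Nonempty (d ≅ (interSub X Y).W.Q.obj x)) ×
      (ObjectProperty.FullSubcategory fun d : (interSub X Y).W.Localization =>
        ∃ y : C, Y.P y ∧ Nonempty (d ≅ (interSub X Y).W.Q.obj y))) := by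
  have hXY : ∀ u, (interSub X Y).P u ↔ X.P u ∧ Y.P u := fun _ => Iff.rfl
  have hYX : ∀ u, (interSub X Y).P u ↔ Y.P u ∧ X.P u := fun _ => and_comm
  refine nonempty_equivalence_prod_of_forall_iso_biprod
    (fun _ _ ⟨_, hx, ⟨i⟩⟩ ⟨_, hy, ⟨j⟩⟩ => hom_eq_zero_of_star hXY hstarXY hx hy i j)
    (fun _ _ ⟨_, hy, ⟨j⟩⟩ ⟨_, hx, ⟨i⟩⟩ => hom_eq_zero_of_star hYX hstarYX hy hx j i) fun d => ?_
  obtain ⟨x, y, hx, hy, e⟩ := exists_iso_biprod_of_star hXY hstarXY hstarYX d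
  exact ⟨_, _, ⟨x, hx, ⟨Iso.refl _⟩⟩, ⟨y, hy, ⟨Iso.refl _⟩⟩, e⟩

/-- (Jørgensen–Kato) If `X`, `Y` are thick subcategories of a triangulated category `C`
with `U = X ∩ Y` and `X * Y = C = Y * X`, then there is a splitting equivalence
`C/U ≌ X/U × Y/U`, where `X/U` and `Y/U` are realized as the full subcategories of the
Verdier quotient `C/U` given by the essential images of `X` and `Y`. -/
theorem splitting_equivalence_of_star_eq_top [IsTriangulated C]
    (X Y : Triangulated.Subcategory C)
    [ObjectProperty.IsClosedUnderIsomorphisms X.P] [ObjectProperty.IsClosedUnderIsomorphisms Y.P]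
    (hXthick : ∀ ⦃a b : C⦄ (i : a ⟶ b) (r : b ⟶ a), i ≫ r = 𝟙 a → X.P b → X.P a)
    (hYthick : ∀ ⦃a b : C⦄ (i : a ⟶ b) (r : b ⟶ a), i ≫ r = 𝟙 a → Y.P b → Y.P a)
    (hstarXY : ∀ E : C, E ∈ star {x | X.P x} {y | Y.P y})
    (hstarYX : ∀ E : C, E ∈ star {y | Y.P y} {x | X.P x}) :
    Nonempty ((interSub X Y).W.Localization ≌
      (ObjectProperty.FullSubcategory fun d : (interSub X Y).W.Localization =>
        ∃ x : C, X.P x ∧ Nonempty (d ≅ (interSub X Y).W.Q.obj x)) ×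
      (ObjectProperty.FullSubcategory fun d : (interSub X Y).W.Localization =>
        ∃ y : C, Y.P y ∧ Nonempty (d ≅ (interSub X Y).W.Q.obj y))) :=
  splitting_equivalence_of_star_eq_top_general X Y hstarXY hstarYX
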